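/- arXiv:0910.5350 — 2 statements merged into one kernel-verified Lean document; each statement's English description precedes it below -/
import Mathlib

section
/- Let Q ≥ 8 be even and let Γ be the quasilattice generated by the Q unit vectors k_j equally spaced on the unit circle. If k ∈ Γ satisfies |k| = 1, then k = k_j for some j ∈ {1,…,Q}. -/
/-- The `j`-th unit wavevector `k_{j+1} = (cos(2πj/Q), sin(2πj/Q))`, identified with
the complex number `e^{2πij/Q}`. -/
noncomputable def kvec (Q : ℕ) (j : ℕ) : ℂ :=
  Complex.exp (2 * Real.pi * Complex.I * j / Q)

/-- The quasilattice Γ: all combinations `Σ_j m_j k_j` with `m ∈ ℕ^Q`. -/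
def Qlattice (Q : ℕ) : Set ℂ :=
  {k | ∃ m : ℕ → ℕ, k = ∑ j ∈ Finset.range Q, (m j : ℂ) * kvec Q j}

/-- The order `N_k`: the minimal total number of generators needed to write `k`. -/
noncomputable def Nord (Q : ℕ) (k : ℂ) : ℕ :=
  sInf {n | ∃ m : ℕ → ℕ, (∑ j ∈ Finset.range Q, m j) = n ∧
    k = ∑ j ∈ Finset.range Q, (m j : ℂ) * kvec Q j}

/-! Write `ζ = e^{2πi/Q}`, so that `k` is an algebraic integer of the cyclotomic field `ℚ(ζ)`.
This field is CM: its complex conjugation commutes with every complex embedding, so `|k| = 1`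
gives `k · k̄ = 1` inside the field and hence `|σ k| = 1` for every embedding `σ`. By Kronecker's
theorem `k` is a root of unity, and for even `Q` the roots of unity of `ℚ(ζ)` are the `Q`-th
ones, i.e. the powers of `ζ`. -/

open NumberField IntermediateField

namespace NumberField

variable {K : Type*} [Field K] [NumberField K]

theorem IsCMField.norm_eq_one_of_norm_eq_one [IsCMField K] {x : K}
    {ψ : K →+* ℂ} (hψ : ‖ψ x‖ = 1) (φ : K →+* ℂ) : ‖φ x‖ = 1 := by
  have hx : x * IsCMField.complexConj K x = 1 := ψ.injective <| by
    rw [map_mul, IsCMField.complexEmbedding_complexConj, Complex.mul_conj', hψ, map_one]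
    norm_num
  have hφ := Complex.mul_conj' (φ x)
  rw [← IsCMField.complexEmbedding_complexConj, ← map_mul, hx, map_one] at hφ
  exact (pow_eq_one_iff_of_nonneg (norm_nonneg _) two_ne_zero).mp (by exact_mod_cast hφ.symm)

theorem pow_torsionOrder_eq_one_of_norm_eq_one {x : K} (hx : IsIntegral ℤ x)
    (h : ∀ φ : K →+* ℂ, ‖φ x‖ = 1) : x ^ Units.torsionOrder K = 1 := by
  obtain ⟨m, hm, hxm⟩ := Embeddings.pow_eq_one_of_norm_eq_one K ℂ hx h
  set y : 𝓞 K := ⟨x, hx⟩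
  have hym : y ^ m = 1 := RingOfIntegers.ext hxm
  set u := (IsUnit.of_pow_eq_one hym hm.ne').unit
  have hu : u ∈ rootsOfUnity (Units.torsionOrder K) (𝓞 K) := by
    rw [Units.rootsOfUnity_eq_torsion, Units.torsion, CommGroup.mem_torsion,
      isOfFinOrder_iff_pow_eq_one]
    exact ⟨m, hm, Units.ext hym⟩
  have hyt : y ^ Units.torsionOrder K = 1 := by
    simpa [u] using congrArg Units.val ((mem_rootsOfUnity _ _).mp hu)
  exact congrArg Subtype.val hyt

end NumberField

theorem IsCyclotomicExtension.Rat.pow_eq_one_of_norm_eq_one {K : Type*} [Field K] [NumberField K]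
    {n : ℕ} [NeZero n] [IsCyclotomicExtension {n} ℚ K] (hn : 2 < n) (hn_even : Even n)
    {x : K} (hx : IsIntegral ℤ x) {φ : K →+* ℂ} (hφ : ‖φ x‖ = 1) : x ^ n = 1 := by
  have := isCMField K (S := {n}) ⟨n, rfl, hn⟩
  have htors := torsionOrder_eq (n := n) (K := K)
  rw [if_pos hn_even] at htors
  rw [← htors]
  exact pow_torsionOrder_eq_one_of_norm_eq_one hx (IsCMField.norm_eq_one_of_norm_eq_one hφ)

theorem IsPrimitiveRoot.pow_eq_one_of_mem_adjoin_of_norm_eq_one {ζ : ℂ} {n : ℕ}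
    (hζ : IsPrimitiveRoot ζ n) (hn : 2 < n) (hn_even : Even n) {z : ℂ} (hzK : z ∈ ℚ⟮ζ⟯)
    (hz : IsIntegral ℤ z) (h1 : ‖z‖ = 1) : z ^ n = 1 := by
  have : NeZero n := ⟨by omega⟩
  -- `ℂ` is not algebraic over `ℚ`, so pass through the subalgebra generated by `ζ`.
  have : IsCyclotomicExtension {n} ℚ ℚ⟮ζ⟯ := by
    change IsCyclotomicExtension {n} ℚ ℚ⟮ζ⟯.toSubalgebra
    rw [adjoin_simple_toSubalgebra_of_isAlgebraic
      ((hζ.isIntegral (NeZero.pos n)).tower_top (A := ℚ)).isAlgebraic]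
    exact hζ.adjoin_isCyclotomicExtension ℚ
  have := IsCyclotomicExtension.numberField {n} ℚ ℚ⟮ζ⟯
  have hint : IsIntegral ℤ (⟨z, hzK⟩ : ℚ⟮ζ⟯) :=
    (isIntegral_algebraMap_iff (algebraMap ℚ⟮ζ⟯ ℂ).injective).mp hz
  exact congrArg Subtype.val <|
    IsCyclotomicExtension.Rat.pow_eq_one_of_norm_eq_one hn hn_even hint (φ := algebraMap ℚ⟮ζ⟯ ℂ) h1

theorem kvec_eq_pow (Q j : ℕ) : kvec Q j = Complex.exp (2 * Real.pi * Complex.I / Q) ^ j := by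
  rw [kvec, ← Complex.exp_nat_mul]
  ring_nf

/-- the only points of Γ on the unit circle are the Q generators. -/
theorem stmt_8 (Q : ℕ) (hQ : 8 ≤ Q) (hQeven : Even Q)
    (k : ℂ) (hk : k ∈ Qlattice Q) (h1 : ‖k‖ = 1) :
    ∃ j < Q, k = kvec Q j := by
  have : NeZero Q := ⟨by omega⟩
  set ζ := Complex.exp (2 * Real.pi * Complex.I / Q)
  have hζ : IsPrimitiveRoot ζ Q := Complex.isPrimitiveRoot_exp Q (NeZero.ne Q)
  obtain ⟨m, rfl⟩ := hk
  simp only [kvec_eq_pow] at h1 ⊢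
  have hK : ∑ j ∈ Finset.range Q, (m j : ℂ) * ζ ^ j ∈ ℚ⟮ζ⟯ :=
    sum_mem fun j _ ↦ mul_mem (_root_.natCast_mem _ _) (pow_mem (mem_adjoin_simple_self ℚ ζ) j)
  have hint : IsIntegral ℤ (∑ j ∈ Finset.range Q, (m j : ℂ) * ζ ^ j) :=
    IsIntegral.sum _ fun j _ ↦ (isIntegral_natCast _).mul ((hζ.isIntegral (by omega)).pow j)
  obtain ⟨j, hj, hζj⟩ := hζ.eq_pow_of_pow_eq_one
    (hζ.pow_eq_one_of_mem_adjoin_of_norm_eq_one (by omega) hQeven hK hint h1)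
  exact ⟨j, hj, hζj.symm⟩
end

section
/- For any integer l ≥ 1 and any n ≥ 2, the sum Π'_{3,n} = Σ_{k+m+r=n, 0≤k,m,r≤n-1} (k!m!r!)^{4l} over ordered triples of nonnegative integers summing to n with each part at most n-1 satisfies Π'_{3,n} ≤ 10((n-1)!)^{4l}. -/
/-!
If `a + b + c = n` and every part is at most `n - r`, where `r ≤ 2`, then
`a! b! c! ≤ r! (n - r)!`: some part `a` is at least `r` (or all factorials are `1`),
`b! c! ≤ (b + c)!`, and `(r + d)! s! ≤ r! (s + d)!` whenever `r ≤ s`. With `M = (n - 1)!` and `e ≥ 2`, the at most six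
triples having a part equal to `n - 1` contribute at most `6 M^e`, and the at most `(n - 1)^2`
others each contribute at most `(2 (n - 2)!)^e = (2 / (n - 1))^e M^e`, in total at most `4 M^e`.
-/

open Finset
open scoped Nat

theorem Nat.factorial_add_mul_factorial_le {r s : ℕ} (h : r ≤ s) (d : ℕ) :
    (r + d)! * s ! ≤ r ! * (s + d)! := by
  rw [← factorial_mul_ascFactorial r d, ← factorial_mul_ascFactorial s d, mul_right_comm,
    mul_assoc]
  gcongr

theorem Nat.factorial_mul_factorial_mul_factorial_le {a b c r : ℕ} (hra : r ≤ a)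
    (hrbc : r ≤ b + c) : a ! * b ! * c ! ≤ r ! * (a + b + c - r)! := by
  obtain ⟨d, rfl⟩ := Nat.exists_eq_add_of_le hra
  calc (r + d)! * b ! * c ! ≤ (r + d)! * (b + c)! := by
        rw [mul_assoc]
        exact Nat.mul_le_mul_left _
          (Nat.le_of_dvd (factorial_pos _) (factorial_mul_factorial_dvd_factorial_add b c))
    _ ≤ r ! * (b + c + d)! := factorial_add_mul_factorial_le hrbc d
    _ = r ! * (r + d + b + c - r)! := by congr 2; omega

theorem Nat.factorial_mul_factorial_mul_factorial_le_of_le_two {a b c r : ℕ} (hr : r ≤ 2)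
    (ha : r ≤ b + c) (hb : r ≤ a + c) (hc : r ≤ a + b) :
    a ! * b ! * c ! ≤ r ! * (a + b + c - r)! := by
  by_cases hra : r ≤ a
  · exact factorial_mul_factorial_mul_factorial_le hra ha
  by_cases hrb : r ≤ b
  · calc a ! * b ! * c ! = b ! * a ! * c ! := by ring
      _ ≤ r ! * (b + a + c - r)! := factorial_mul_factorial_mul_factorial_le hrb hb
      _ = r ! * (a + b + c - r)! := by rw [Nat.add_comm b a]
  by_cases hrc : r ≤ c
  · calc a ! * b ! * c ! = c ! * a ! * b ! := by ring
      _ ≤ r ! * (c + a + b - r)! := factorial_mul_factorial_mul_factorial_le hrc hc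
      _ = r ! * (a + b + c - r)! := by congr 2; omega
  have h1 : ∀ x < r, x ! = 1 := fun x hx => factorial_eq_one.2 (by omega)
  rw [h1 a (by omega), h1 b (by omega), h1 c (by omega)]
  exact Nat.mul_pos (factorial_pos _) (factorial_pos _)

-- `(k, m)` encodes the triple `(k, m, n - k - m)`.
def properTriples (n : ℕ) : Finset (ℕ × ℕ) :=
  (range (n + 1) ×ˢ range (n + 1)).filter
    (fun p => p.1 + p.2 ≤ n ∧ p.1 ≤ n - 1 ∧ p.2 ≤ n - 1 ∧ n - p.1 - p.2 ≤ n - 1)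

def tripleFactorial (n : ℕ) (p : ℕ × ℕ) : ℕ := p.1 ! * p.2 ! * (n - p.1 - p.2)!

abbrev AllPartsLe (n r : ℕ) (p : ℕ × ℕ) : Prop :=
  p.1 ≤ n - r ∧ p.2 ≤ n - r ∧ n - p.1 - p.2 ≤ n - r

theorem mem_properTriples {n : ℕ} {p : ℕ × ℕ} :
    p ∈ properTriples n ↔ p.1 + p.2 ≤ n ∧ AllPartsLe n 1 p := by
  simp only [properTriples, AllPartsLe, mem_filter, mem_product, mem_range]
  omega

theorem tripleFactorial_le_of_allPartsLe {n r : ℕ} {p : ℕ × ℕ} (hr : r ≤ 2) (hrn : r ≤ n)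
    (hsum : p.1 + p.2 ≤ n) (hp : AllPartsLe n r p) : tripleFactorial n p ≤ r ! * (n - r)! := by
  obtain ⟨h1, h2, h3⟩ := hp
  have hparts : p.1 + p.2 + (n - p.1 - p.2) = n := by omega
  have := @Nat.factorial_mul_factorial_mul_factorial_le_of_le_two p.1 p.2 (n - p.1 - p.2) r hr
    (by omega) (by omega) (by omega)
  rwa [hparts] at this

theorem tripleFactorial_le {n : ℕ} {p : ℕ × ℕ} (hn : 1 ≤ n) (hp : p ∈ properTriples n) :
    tripleFactorial n p ≤ (n - 1)! := by
  obtain ⟨hsum, hparts⟩ := mem_properTriples.1 hp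
  simpa using tripleFactorial_le_of_allPartsLe (by norm_num) hn hsum hparts

theorem card_filter_allPartsLe_two_le {n : ℕ} (hn : 1 ≤ n) :
    #((properTriples n).filter (AllPartsLe n 2)) ≤ (n - 1) ^ 2 := by
  calc _ ≤ #(range (n - 1) ×ˢ range (n - 1)) := by
        refine card_le_card fun p hp => ?_
        obtain ⟨hp, h1, h2, h3⟩ := mem_filter.1 hp
        have := (mem_properTriples.1 hp).1
        simp only [mem_product, mem_range]
        omega
    _ = (n - 1) ^ 2 := by rw [card_product, card_range, sq]

theorem card_filter_not_allPartsLe_two_le (n : ℕ) :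
    #((properTriples n).filter (¬ AllPartsLe n 2 ·)) ≤ 6 := by
  calc _ ≤ #({(n - 1, 1), (n - 1, 0), (1, n - 1), (0, n - 1), (1, 0), (0, 1)} : Finset _) := by
        refine card_le_card fun p hp => ?_
        obtain ⟨hp, hlarge⟩ := mem_filter.1 hp
        have := mem_properTriples.1 hp
        simp only [AllPartsLe, mem_insert, mem_singleton, Prod.ext_iff] at this hlarge ⊢
        omega
    _ ≤ 6 := card_le_six

theorem sum_pow_le_card_mul {ι : Type*} {s : Finset ι} {f : ι → ℕ} {B : ℕ}
    (h : ∀ i ∈ s, f i ≤ B) (e : ℕ) : ∑ i ∈ s, f i ^ e ≤ #s * B ^ e :=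
  sum_le_card_nsmul s _ _ fun i hi => Nat.pow_le_pow_left (h i hi) e

theorem sq_mul_two_mul_factorial_pow_le {n e : ℕ} (hn : 3 ≤ n) (he : 2 ≤ e) :
    (n - 1) ^ 2 * (2 * (n - 2)!) ^ e ≤ 4 * (n - 1)! ^ e := by
  obtain ⟨m, rfl⟩ : ∃ m, n = m + 3 := ⟨n - 3, by omega⟩
  obtain ⟨f, rfl⟩ : ∃ f, e = f + 2 := ⟨e - 2, by omega⟩
  simp only [show m + 3 - 1 = m + 2 by omega, show m + 3 - 2 = m + 1 by omega]
  calc (m + 2) ^ 2 * (2 * (m + 1)!) ^ (f + 2) = 4 * (2 ^ f * (m + 2) ^ 2) * (m + 1)! ^ (f + 2) := by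
        ring
    _ ≤ 4 * ((m + 2) ^ f * (m + 2) ^ 2) * (m + 1)! ^ (f + 2) := by gcongr; omega
    _ = 4 * (m + 2)! ^ (f + 2) := by rw [Nat.factorial_succ (m + 1), mul_pow]; ring

theorem sum_tripleFactorial_pow_le {n e : ℕ} (hn : 2 ≤ n) (he : 2 ≤ e) :
    ∑ p ∈ properTriples n, tripleFactorial n p ^ e ≤ 10 * (n - 1)! ^ e := by
  have hle : ∀ p ∈ properTriples n, tripleFactorial n p ≤ (n - 1)! :=
    fun p hp => tripleFactorial_le (by omega) hp
  obtain rfl | hn3 : n = 2 ∨ 3 ≤ n := by omega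
  · have hcard : #(properTriples 2) ≤ 9 := (card_filter_le _ _).trans (by simp)
    calc _ ≤ #(properTriples 2) * (2 - 1)! ^ e := sum_pow_le_card_mul hle e
      _ ≤ 10 * (2 - 1)! ^ e := by gcongr; omega
  have hsmall : ∀ p ∈ (properTriples n).filter (AllPartsLe n 2),
      tripleFactorial n p ≤ 2 * (n - 2)! := fun p hp =>
    tripleFactorial_le_of_allPartsLe le_rfl (by omega)
      (mem_properTriples.1 (mem_filter.1 hp).1).1 (mem_filter.1 hp).2
  rw [← sum_filter_add_sum_filter_not _ (AllPartsLe n 2)]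
  calc _ ≤ #((properTriples n).filter (AllPartsLe n 2)) * (2 * (n - 2)!) ^ e
          + #((properTriples n).filter (¬ AllPartsLe n 2 ·)) * (n - 1)! ^ e :=
        add_le_add (sum_pow_le_card_mul hsmall e)
          (sum_pow_le_card_mul (fun p hp => hle p (mem_filter.1 hp).1) e)
    _ ≤ (n - 1) ^ 2 * (2 * (n - 2)!) ^ e + 6 * (n - 1)! ^ e := by
        gcongr
        exacts [card_filter_allPartsLe_two_le (by omega), card_filter_not_allPartsLe_two_le n]
    _ ≤ 4 * (n - 1)! ^ e + 6 * (n - 1)! ^ e :=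
        Nat.add_le_add_right (sq_mul_two_mul_factorial_pow_le hn3 he) _
    _ = 10 * (n - 1)! ^ e := by ring

/-- Π'_{3,n} = Σ_{k+m+r=n, 0≤k,m,r≤n-1} (k!m!r!)^{4l} ≤ 10((n-1)!)^{4l}
for n ≥ 2, the sum being over ordered triples with no part equal to n. -/
theorem stmt_15 (l : ℕ) (hl : 1 ≤ l) (n : ℕ) (hn : 2 ≤ n) :
    (∑ p ∈ (Finset.range (n + 1) ×ˢ Finset.range (n + 1)).filter
        (fun p => p.1 + p.2 ≤ n ∧ p.1 ≤ n - 1 ∧ p.2 ≤ n - 1 ∧ n - p.1 - p.2 ≤ n - 1),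
        ((Nat.factorial p.1 * Nat.factorial p.2 * Nat.factorial (n - p.1 - p.2) : ℕ) : ℝ)
          ^ (4 * l)) ≤
      10 * ((Nat.factorial (n - 1) : ℕ) : ℝ) ^ (4 * l) := by
  exact_mod_cast sum_tripleFactorial_pow_le hn (by omega : 2 ≤ 4 * l)
end
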